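/- Let κ : ℝ³ → ℝ be measurable with 0 ≤ κ(x) ≤ K_κ for all x. Let f : ℝ³×ℝ³ → [0,∞) be measurable with ∫_{ℝ⁶} f dx dv = ρ₀ > 0, ∫_{ℝ⁶} f |log f| dx dv ≤ h̄ < ∞, and ∫_{ℝ⁶} ⟨y⟩^{m} f(y,v) dy dv ≤ K < ∞ for some m > 3. Define H(x,v) := ∫_{ℝ³} κ(x−y) f(y,v) dy. Then there exists a constant C_H > 0, depending only on K_κ, ρ₀, h̄, m and K, such that ∫_{ℝ³} H(x,v) log H(x,v) dv ≤ C_H for every x ∈ ℝ³. -/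

import Mathlib

/-! Young's inequality `u s ≤ u log u + exp (s - 1)`, applied with `u = κ(x-y) f(y,v)` and
`s = log H(x,v) - m log ⟨y⟩` and integrated in `y`, gives
`H log H ≤ ∫ u log u dy + m ∫ u log ⟨y⟩ dy + e⁻¹ H ∫ ⟨y⟩^{-m} dy`, and the last integral is finite
because `m > 3`. Since `0 ≤ u ≤ K_κ f`, each term is bounded by `K_κ` times the mass, entropy or
`m`-th moment of `f(·,v)`, uniformly in `x`; integrating in `v` gives a bound in terms of `ρ₀`,
`h̄` and `K`. -/

open MeasureTheory Real

noncomputable section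

abbrev E3 : Type := EuclideanSpace ℝ (Fin 3)

def jap (x : E3) : ℝ := Real.sqrt (1 + ‖x‖ ^ 2)

theorem mul_le_mul_log_add_exp_sub_one {u : ℝ} (hu : 0 ≤ u) (s : ℝ) :
    u * s ≤ u * log u + exp (s - 1) := by
  rcases hu.eq_or_lt with rfl | hu
  · simpa using (exp_pos _).le
  have hexp : u * exp (s - log u - 1) = exp (s - 1) := by
    rw [show s - log u - 1 = (s - 1) - log u by ring, exp_sub, exp_log hu]
    field_simp
  calc u * s = u * log u + u * (s - log u) := by ring
    _ ≤ u * log u + u * exp (s - log u - 1) := by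
        gcongr
        linarith [add_one_le_exp (s - log u - 1)]
    _ = u * log u + exp (s - 1) := by rw [hexp]

theorem mul_log_le_of_le_mul {F c t : ℝ} (hF : 0 ≤ F) (hFct : F ≤ c * t) (hc : 0 ≤ c)
    (ht : 0 ≤ t) : F * log F ≤ c * (|log c| * t + t * |log t|) := by
  rcases le_or_gt F 1 with hF1 | hF1
  · exact (mul_log_nonpos hF hF1).trans (by positivity)
  have hct : 1 < c * t := hF1.trans_le hFct
  have hc0 : 0 < c := pos_of_mul_pos_left (one_pos.trans hct) ht
  have ht0 : 0 < t := pos_of_mul_pos_right (one_pos.trans hct) hc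
  calc F * log F ≤ (c * t) * log (c * t) :=
        mul_le_mul hFct (log_le_log (one_pos.trans hF1) hFct) (log_nonneg hF1.le) (by positivity)
    _ = c * (log c * t + t * log t) := by rw [log_mul hc0.ne' ht0.ne']; ring
    _ ≤ c * (|log c| * t + t * |log t|) := by gcongr <;> exact le_abs_self _

theorem integral_mul_log_integral_le {α : Type*} [MeasurableSpace α] {μ : Measure α}
    {F w A B : α → ℝ} (hF0 : ∀ y, 0 ≤ F y) (hF : Integrable F μ) (hw : ∀ y, 0 < w y)
    (hw_int : Integrable w μ) (hA : Integrable A μ) (hB : Integrable B μ)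
    (hFA : ∀ y, F y * log (F y) ≤ A y) (hFB : ∀ y, -(F y * log (w y)) ≤ B y) :
    (∫ y, F y ∂μ) * log (∫ y, F y ∂μ) ≤
      ∫ y, A y ∂μ + ∫ y, B y ∂μ + exp (-1) * (∫ y, F y ∂μ) * ∫ y, w y ∂μ := by
  set a := ∫ y, F y ∂μ
  rcases (integral_nonneg hF0 : 0 ≤ a).eq_or_lt with ha | ha
  · have hF_ae : F =ᵐ[μ] 0 := (integral_eq_zero_iff_of_nonneg hF0 hF).mp ha.symm
    have hA0 : 0 ≤ ∫ y, A y ∂μ := integral_nonneg_of_ae <| hF_ae.mono fun y hy => by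
      simpa [hy] using hFA y
    have hB0 : 0 ≤ ∫ y, B y ∂μ := integral_nonneg_of_ae <| hF_ae.mono fun y hy => by
      simpa [hy] using hFB y
    rw [show a = 0 from ha.symm]
    simpa using add_nonneg hA0 hB0
  -- Young's inequality with `s = log a + log (w y)` gives `exp (s - 1) = a * w y / e`.
  have hpt : ∀ y, F y * log a ≤ A y + B y + exp (-1) * a * w y := fun y => by
    have h := mul_le_mul_log_add_exp_sub_one (hF0 y) (log a + log (w y))
    rw [show log a + log (w y) - 1 = log a + log (w y) + -1 by ring, exp_add, exp_add,
      exp_log ha, exp_log (hw y)] at h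
    linarith [hFA y, hFB y]
  have hAB : Integrable (fun y => A y + B y) μ := hA.add hB
  calc a * log a = ∫ y, F y * log a ∂μ := (integral_mul_const _ _).symm
    _ ≤ ∫ y, (A y + B y + exp (-1) * a * w y) ∂μ :=
        integral_mono (hF.mul_const _) (hAB.add (hw_int.const_mul _)) hpt
    _ = ∫ y, A y ∂μ + ∫ y, B y ∂μ + exp (-1) * a * ∫ y, w y ∂μ := by
        rw [integral_add hAB (hw_int.const_mul _), integral_add hA hB,
          integral_const_mul]

theorem one_le_jap (y : E3) : 1 ≤ jap y :=
  one_le_sqrt.mpr (le_add_of_nonneg_right (sq_nonneg _))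

theorem jap_pos (y : E3) : 0 < jap y := one_pos.trans_le (one_le_jap y)

theorem integrable_jap_rpow_neg {m : ℝ} (hm : 3 < m) :
    Integrable (fun y : E3 => jap y ^ (-m)) := by
  have hrw : ∀ y : E3, jap y ^ (-m) = ((1 : ℝ) + ‖y‖ ^ 2) ^ (-m / 2) := fun y => by
    rw [jap, sqrt_eq_rpow, ← rpow_mul (by positivity)]
    ring_nf
  simp only [hrw]
  exact integrable_rpow_neg_one_add_norm_sq (by simpa [finrank_euclideanSpace] using hm)

theorem neg_log_jap_rpow_neg_le (m : ℝ) (y : E3) : -log (jap y ^ (-m)) ≤ jap y ^ m := by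
  rw [log_rpow (jap_pos y), neg_mul, neg_neg, ← log_rpow (jap_pos y)]
  linarith [log_le_sub_one_of_pos (rpow_pos_of_pos (jap_pos y) m)]

theorem integral_mul_log_integral_kernel_le {Kκ m : ℝ} (hm : 3 < m) {k g : E3 → ℝ}
    (hk_meas : Measurable k) (hk : ∀ y, 0 ≤ k y ∧ k y ≤ Kκ) (hg0 : ∀ y, 0 ≤ g y)
    (hg : Integrable g) (hg_ent : Integrable (fun y => g y * |log (g y)|))
    (hg_mom : Integrable (fun y => jap y ^ m * g y)) :
    (∫ y, k y * g y) * log (∫ y, k y * g y) ≤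
      Kκ * ((|log Kκ| + exp (-1) * ∫ y, jap y ^ (-m)) * (∫ y, g y) +
        (∫ y, g y * |log (g y)|) + ∫ y, jap y ^ m * g y) := by
  have hK : 0 ≤ Kκ := (hk 0).1.trans (hk 0).2
  have hkg_le : ∀ y, k y * g y ≤ Kκ * g y := fun y =>
    mul_le_mul_of_nonneg_right (hk y).2 (hg0 y)
  have hkg : Integrable (fun y => k y * g y) := hg.bdd_mul hk_meas.aestronglyMeasurable
    (ae_of_all _ fun y => by rw [norm_of_nonneg (hk y).1]; exact (hk y).2)
  have hgl : Integrable (fun y => |log Kκ| * g y + g y * |log (g y)|) :=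
    (hg.const_mul _).add hg_ent
  have h := integral_mul_log_integral_le (fun y => mul_nonneg (hk y).1 (hg0 y)) hkg
    (fun y => rpow_pos_of_pos (jap_pos y) (-m)) (integrable_jap_rpow_neg hm)
    (hgl.const_mul Kκ) (hg_mom.const_mul Kκ)
    (fun y => mul_log_le_of_le_mul (mul_nonneg (hk y).1 (hg0 y)) (hkg_le y) hK (hg0 y))
    (fun y => calc
      -(k y * g y * log (jap y ^ (-m))) = k y * g y * -log (jap y ^ (-m)) := by ring
      _ ≤ k y * g y * jap y ^ m :=
          mul_le_mul_of_nonneg_left (neg_log_jap_rpow_neg_le m y) (mul_nonneg (hk y).1 (hg0 y))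
      _ ≤ Kκ * g y * jap y ^ m :=
          mul_le_mul_of_nonneg_right (hkg_le y) (rpow_pos_of_pos (jap_pos y) m).le
      _ = Kκ * (jap y ^ m * g y) := by ring)
  have hmass : ∫ y, k y * g y ≤ Kκ * ∫ y, g y := by
    rw [← integral_const_mul]
    exact integral_mono hkg (hg.const_mul Kκ) hkg_le
  have hw0 : 0 ≤ ∫ y : E3, jap y ^ (-m) :=
    integral_nonneg fun y => (rpow_pos_of_pos (jap_pos y) _).le
  rw [integral_const_mul, integral_const_mul, integral_add (hg.const_mul _) hg_ent,
    integral_const_mul] at h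
  have := mul_le_mul_of_nonneg_right hmass (mul_nonneg (exp_pos (-1)).le hw0)
  linear_combination h + this

theorem integral_marginal_entropy_moment_le (c : ℝ) {ρ₀ hbar m K : ℝ} {f : E3 × E3 → ℝ}
    (hf_int : Integrable f) (hmass : ∫ p, f p = ρ₀)
    (hent_int : Integrable fun p : E3 × E3 => f p * |log (f p)|)
    (hent : ∫ p : E3 × E3, f p * |log (f p)| ≤ hbar)
    (hmom_int : Integrable fun p : E3 × E3 => jap p.1 ^ m * f p)
    (hmom : ∫ p : E3 × E3, jap p.1 ^ m * f p ≤ K) :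
    Integrable (fun v : E3 => c * (∫ y, f (y, v)) + (∫ y, f (y, v) * |log (f (y, v))|) +
        ∫ y, jap y ^ m * f (y, v)) ∧
      ∫ v : E3, (c * (∫ y, f (y, v)) + (∫ y, f (y, v) * |log (f (y, v))|) +
        ∫ y, jap y ^ m * f (y, v)) ≤ c * ρ₀ + hbar + K := by
  have hf_v : Integrable fun v : E3 => c * ∫ y, f (y, v) :=
    hf_int.integral_prod_right.const_mul c
  have hent_v : Integrable fun v : E3 => ∫ y, f (y, v) * |log (f (y, v))| :=
    hent_int.integral_prod_right
  have hfe_v : Integrable fun v : E3 =>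
      c * (∫ y, f (y, v)) + ∫ y, f (y, v) * |log (f (y, v))| :=
    hf_v.add hent_v
  have hmom_v : Integrable fun v : E3 => ∫ y, jap y ^ m * f (y, v) :=
    hmom_int.integral_prod_right
  refine ⟨hfe_v.add hmom_v, ?_⟩
  rw [integral_add hfe_v hmom_v, integral_add hf_v hent_v, integral_const_mul,
    ← integral_prod_symm f hf_int, ← integral_prod_symm _ hent_int,
    ← integral_prod_symm _ hmom_int, ← Measure.volume_eq_prod, hmass]
  gcongr

theorem statement4_general (Kκ ρ₀ hbar m K : ℝ) (hm : 3 < m)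
    (κ : E3 → ℝ) (hκ_meas : Measurable κ) (hκ : ∀ x : E3, 0 ≤ κ x ∧ κ x ≤ Kκ)
    (f : E3 × E3 → ℝ) (hf_nonneg : ∀ p, 0 ≤ f p)
    (hf_int : Integrable f) (hmass : ∫ p, f p = ρ₀)
    (hent_int : Integrable (fun p : E3 × E3 => f p * |Real.log (f p)|))
    (hent : ∫ p : E3 × E3, f p * |Real.log (f p)| ≤ hbar)
    (hmom_int : Integrable (fun p : E3 × E3 => jap p.1 ^ m * f p))
    (hmom : ∫ p : E3 × E3, jap p.1 ^ m * f p ≤ K) :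
    ∃ CH : ℝ, 0 < CH ∧ ∀ x : E3,
      (∫ v : E3, (∫ y : E3, κ (x - y) * f (y, v)) *
          Real.log (∫ y : E3, κ (x - y) * f (y, v))) ≤ CH := by
  set c := |log Kκ| + exp (-1) * ∫ y : E3, jap y ^ (-m)
  obtain ⟨hmarg_int, hmarg_le⟩ :=
    integral_marginal_entropy_moment_le c hf_int hmass hent_int hent hmom_int hmom
  have hK : 0 ≤ Kκ := (hκ 0).1.trans (hκ 0).2
  refine ⟨max 1 (Kκ * (c * ρ₀ + hbar + K)), by positivity, fun x => ?_⟩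
  have hH_le : ∀ᵐ v : E3, (∫ y : E3, κ (x - y) * f (y, v)) *
      log (∫ y : E3, κ (x - y) * f (y, v)) ≤ Kκ * (c * (∫ y, f (y, v)) +
        (∫ y, f (y, v) * |log (f (y, v))|) + ∫ y, jap y ^ m * f (y, v)) := by
    filter_upwards [hf_int.prod_left_ae, hent_int.prod_left_ae, hmom_int.prod_left_ae]
      with v hfv hentv hmomv
    exact integral_mul_log_integral_kernel_le hm
      (hκ_meas.comp (measurable_const.sub measurable_id)) (fun y => hκ (x - y))
      (fun y => hf_nonneg _) hfv hentv hmomv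
  by_cases hH : Integrable fun v : E3 => (∫ y : E3, κ (x - y) * f (y, v)) *
      log (∫ y : E3, κ (x - y) * f (y, v))
  · calc _ ≤ _ := integral_mono_ae hH (hmarg_int.const_mul Kκ) hH_le
      _ ≤ Kκ * (c * ρ₀ + hbar + K) := by rw [integral_const_mul]; gcongr
      _ ≤ _ := le_max_right _ _
  · exact (integral_undef hH).trans_le (zero_le_one.trans (le_max_left _ _))

/-- Entropy bound `∫ H log H dv ≤ C_H`, uniformly in `x`, for
`H(x,v) = ∫ κ(x-y) f(y,v) dy` with `0 ≤ κ ≤ K_κ` (note `Real.log 0 = 0`, matching the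
convention `0·log 0 = 0`). -/
theorem statement4 (Kκ ρ₀ hbar m K : ℝ) (hm : 3 < m)
    (κ : E3 → ℝ) (hκ_meas : Measurable κ) (hκ : ∀ x : E3, 0 ≤ κ x ∧ κ x ≤ Kκ)
    (f : E3 × E3 → ℝ) (hf_meas : Measurable f) (hf_nonneg : ∀ p, 0 ≤ f p)
    (hf_int : Integrable f) (hmass : ∫ p, f p = ρ₀) (hρ : 0 < ρ₀)
    (hent_int : Integrable (fun p : E3 × E3 => f p * |Real.log (f p)|))
    (hent : ∫ p : E3 × E3, f p * |Real.log (f p)| ≤ hbar)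
    (hmom_int : Integrable (fun p : E3 × E3 => jap p.1 ^ m * f p))
    (hmom : ∫ p : E3 × E3, jap p.1 ^ m * f p ≤ K) :
    ∃ CH : ℝ, 0 < CH ∧ ∀ x : E3,
      (∫ v : E3, (∫ y : E3, κ (x - y) * f (y, v)) *
          Real.log (∫ y : E3, κ (x - y) * f (y, v))) ≤ CH :=
  statement4_general Kκ ρ₀ hbar m K hm κ hκ_meas hκ f hf_nonneg hf_int hmass hent_int hent hmom_int
    hmom

end
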